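/- In the unconstrained features autoregressive model, if the hidden embeddings of the training example (x_i, y_i) are all distinct from those of the validation example (x_v, y_v) (distinct free parameters), then the inner product of the per-embedding gradients of the two log-likelihoods vanishes, and the full gradient inner product ⟨∇_θ log π_θ(y_v|x_v), ∇_θ log π_θ(y_i|x_i)⟩ restricted to all parameters except W is zero; hence the total gradient inner product equals Σ_{k=1}^{|y_v|} Σ_{k'=1}^{|y_i|} α_{k,k'} ⟨h_{x_v,y_{v,<k}}, h_{x_i,y_{i,<k'}}⟩, where α_{k,k'} = ⟨e_{y_{v,k}} − π_θ(·|x_v,y_{v,<k}), e_{y_{i,k'}} − π_θ(·|x_i,y_{i,<k'})⟩. -/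

import Mathlib

open Finset
open scoped RealInnerProductSpace

/-- Parameter space of the unconstrained-features model: the unembedding matrix
`W` (coordinates `Sum.inl (i, j)`) together with one free embedding `h_p ∈ ℝ^d`
for each (input, prefix) pair `p : P` (coordinates `Sum.inr (p, j)`). -/
abbrev ForValue.ParamSpace (m d : ℕ) (P : Type) [Fintype P] : Type :=
  EuclideanSpace ℝ ((Fin m × Fin d) ⊕ (P × Fin d))

/-- Softmax probability `π_θ(i | p)` of token `i` for prefix `p`, computed from
the parameters `θ = (W, {h_p})`. -/
noncomputable def ForValue.prob {m d : ℕ} {P : Type} [Fintype P]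
    (θ : ForValue.ParamSpace m d P) (p : P) (i : Fin m) : ℝ :=
  Real.exp (∑ j, θ (Sum.inl (i, j)) * θ (Sum.inr (p, j)))
    / ∑ i' : Fin m, Real.exp (∑ j, θ (Sum.inl (i', j)) * θ (Sum.inr (p, j)))

/-- Autoregressive log-likelihood `log π_θ(y|x) = ∑_k log π_θ(y_k | x, y_{<k})`,
where `pre k : P` is the (input, prefix) pair at position `k`. -/
noncomputable def ForValue.loglik {m d : ℕ} {P : Type} [Fintype P] (K : ℕ)
    (pre : Fin K → P) (y : Fin K → Fin m) (θ : ForValue.ParamSpace m d P) : ℝ :=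
  ∑ k, Real.log (ForValue.prob θ (pre k) (y k))

namespace ForValue

variable {m d : ℕ} {P : Type} [Fintype P]

/-- score -/
noncomputable def sc (θ : ParamSpace m d P) (i : Fin m) (p : P) : ℝ :=
  ∑ j, θ (Sum.inl (i, j)) * θ (Sum.inr (p, j))

noncomputable def Lmap (θ : ParamSpace m d P) (i : Fin m) (p : P) :
    ParamSpace m d P →L[ℝ] ℝ :=
  ∑ j, (θ (Sum.inl (i, j)) • EuclideanSpace.proj (Sum.inr (p, j))
        + θ (Sum.inr (p, j)) • EuclideanSpace.proj (Sum.inl (i, j)))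

lemma hasFDerivAt_sc (θ : ParamSpace m d P) (i : Fin m) (p : P) :
    HasFDerivAt (fun θ' => sc θ' i p) (Lmap θ i p) θ := by
  unfold sc Lmap
  apply HasFDerivAt.fun_sum
  intro j _
  exact ((EuclideanSpace.proj (Sum.inl (i, j)) :
      ParamSpace m d P →L[ℝ] ℝ).hasFDerivAt (x := θ)).mul
    ((EuclideanSpace.proj (Sum.inr (p, j)) :
      ParamSpace m d P →L[ℝ] ℝ).hasFDerivAt (x := θ))

noncomputable def Z (θ : ParamSpace m d P) (p : P) : ℝ :=
  ∑ i : Fin m, Real.exp (sc θ i p)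

lemma Z_pos [NeZero m] (θ : ParamSpace m d P) (p : P) : 0 < Z θ p :=
  Finset.sum_pos (fun i _ => Real.exp_pos _) univ_nonempty

lemma prob_eq (θ : ParamSpace m d P) (p : P) (i : Fin m) :
    prob θ p i = Real.exp (sc θ i p) / Z θ p := rfl

lemma log_prob [NeZero m] (θ : ParamSpace m d P) (p : P) (i : Fin m) :
    Real.log (prob θ p i) = sc θ i p - Real.log (Z θ p) := by
  rw [prob_eq, Real.log_div (Real.exp_ne_zero _) (Z_pos θ p).ne', Real.log_exp]

noncomputable def Dmap (θ : ParamSpace m d P) (p : P) (ytok : Fin m) :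
    ParamSpace m d P →L[ℝ] ℝ :=
  Lmap θ ytok p - ∑ i, prob θ p i • Lmap θ i p

lemma hasFDerivAt_logprob [NeZero m] (θ : ParamSpace m d P) (p : P) (ytok : Fin m) :
    HasFDerivAt (fun θ' => Real.log (prob θ' p ytok)) (Dmap θ p ytok) θ := by
  have hZ : HasFDerivAt (fun θ' => Z θ' p)
      (∑ i, Real.exp (sc θ i p) • Lmap θ i p) θ := by
    unfold Z
    exact HasFDerivAt.fun_sum fun i _ => (hasFDerivAt_sc θ i p).exp
  have hlog := hZ.log (Z_pos θ p).ne'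
  have h := (hasFDerivAt_sc θ ytok p).fun_sub hlog
  have heq : (fun θ' => Real.log (prob θ' p ytok))
      = fun θ' => sc θ' ytok p - Real.log (Z θ' p) :=
    funext fun θ' : ParamSpace m d P => log_prob θ' p ytok
  rw [heq]
  refine h.congr_fderiv ?_
  unfold Dmap
  congr 1
  rw [Finset.smul_sum]
  refine Finset.sum_congr rfl fun i _ => ?_
  rw [smul_smul, prob_eq, div_eq_inv_mul]

lemma hasFDerivAt_loglik [NeZero m] (K : ℕ) (pre : Fin K → P) (y : Fin K → Fin m)
    (θ : ParamSpace m d P) :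
    HasFDerivAt (loglik K pre y) (∑ k, Dmap θ (pre k) (y k)) θ := by
  unfold loglik
  exact HasFDerivAt.fun_sum fun k _ => hasFDerivAt_logprob θ (pre k) (y k)

lemma gradient_loglik_apply [NeZero m] [DecidableEq P] (K : ℕ) (pre : Fin K → P) (y : Fin K → Fin m)
    (θ : ParamSpace m d P) (c : (Fin m × Fin d) ⊕ (P × Fin d)) :
    gradient (loglik K pre y) θ c
      = (∑ k, Dmap θ (pre k) (y k)) (EuclideanSpace.single c 1) := by
  have hg := (hasFDerivAt_iff_hasGradientAt.mp (hasFDerivAt_loglik K pre y θ)).gradient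
  rw [hg]
  have := InnerProductSpace.toDual_symm_apply (𝕜 := ℝ)
    (x := EuclideanSpace.single c (1 : ℝ)) (y := ∑ k, Dmap θ (pre k) (y k))
  rw [← this, EuclideanSpace.inner_single_right]
  simp


variable [DecidableEq P]

lemma Lmap_apply_inr (θ : ParamSpace m d P) (i : Fin m) (p q : P) (j0 : Fin d) :
    Lmap θ i p (EuclideanSpace.single (Sum.inr (q, j0)) 1)
      = if p = q then θ (Sum.inl (i, j0)) else 0 := by
  simp only [Lmap, ContinuousLinearMap.sum_apply, ContinuousLinearMap.add_apply,
    ContinuousLinearMap.smul_apply, PiLp.proj_apply,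
    EuclideanSpace.single_apply]
  simp [Prod.ext_iff, ite_and, mul_ite, Finset.sum_ite_eq', eq_comm]

lemma Lmap_apply_inl (θ : ParamSpace m d P) (i : Fin m) (p : P) (i0 : Fin m) (j0 : Fin d) :
    Lmap θ i p (EuclideanSpace.single (Sum.inl (i0, j0)) 1)
      = if i = i0 then θ (Sum.inr (p, j0)) else 0 := by
  simp only [Lmap, ContinuousLinearMap.sum_apply, ContinuousLinearMap.add_apply,
    ContinuousLinearMap.smul_apply, PiLp.proj_apply,
    EuclideanSpace.single_apply]
  simp [Prod.ext_iff, ite_and, mul_ite, Finset.sum_ite_eq', eq_comm]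

lemma Dmap_apply_inr [NeZero m] (θ : ParamSpace m d P) (p : P) (ytok : Fin m)
    (q : P) (j : Fin d) :
    Dmap θ p ytok (EuclideanSpace.single (Sum.inr (q, j)) 1)
      = if p = q then θ (Sum.inl (ytok, j)) - ∑ i, prob θ p i * θ (Sum.inl (i, j))
        else 0 := by
  simp only [Dmap, ContinuousLinearMap.sub_apply, ContinuousLinearMap.sum_apply,
    ContinuousLinearMap.smul_apply, Lmap_apply_inr, smul_eq_mul]
  by_cases h : p = q <;> simp [h]

lemma Dmap_apply_inl [NeZero m] (θ : ParamSpace m d P) (p : P) (ytok : Fin m)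
    (i0 : Fin m) (j : Fin d) :
    Dmap θ p ytok (EuclideanSpace.single (Sum.inl (i0, j)) 1)
      = ((if i0 = ytok then (1:ℝ) else 0) - prob θ p i0) * θ (Sum.inr (p, j)) := by
  simp only [Dmap, ContinuousLinearMap.sub_apply, ContinuousLinearMap.sum_apply,
    ContinuousLinearMap.smul_apply, Lmap_apply_inl, smul_eq_mul]
  rw [Finset.sum_congr rfl (fun i _ => mul_ite (i = i0) (prob θ p i) (θ (Sum.inr (p,j))) 0)]
  simp only [mul_zero, Finset.sum_ite_eq', Finset.mem_univ, if_true]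
  by_cases h : i0 = ytok
  · simp [h]
    try ring
  · have h' : ¬ ytok = i0 := fun e => h e.symm
    simp [h, h']
    try ring

lemma grad_inr [NeZero m] (K : ℕ) (pre : Fin K → P) (y : Fin K → Fin m)
    (θ : ParamSpace m d P) (q : P) (j : Fin d) :
    gradient (loglik K pre y) θ (Sum.inr (q, j))
      = ∑ k, if pre k = q
          then θ (Sum.inl (y k, j)) - ∑ i, prob θ (pre k) i * θ (Sum.inl (i, j))
          else 0 := by
  rw [gradient_loglik_apply, ContinuousLinearMap.sum_apply]
  exact Finset.sum_congr rfl fun k _ => Dmap_apply_inr θ (pre k) (y k) q j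

lemma grad_inl [NeZero m] (K : ℕ) (pre : Fin K → P) (y : Fin K → Fin m)
    (θ : ParamSpace m d P) (i0 : Fin m) (j : Fin d) :
    gradient (loglik K pre y) θ (Sum.inl (i0, j))
      = ∑ k, ((if i0 = y k then (1:ℝ) else 0) - prob θ (pre k) i0)
          * θ (Sum.inr (pre k, j)) := by
  rw [gradient_loglik_apply, ContinuousLinearMap.sum_apply]
  exact Finset.sum_congr rfl fun k _ => Dmap_apply_inl θ (pre k) (y k) i0 j


end ForValue

lemma ForValue.sum_rev4 {A B C D : Type*} [Fintype A] [Fintype B] [Fintype C] [Fintype D]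
    (f : A → B → C → D → ℝ) :
    ∑ a, ∑ b, ∑ c, ∑ dd, f a b c dd = ∑ dd, ∑ c, ∑ b, ∑ a, f a b c dd := by
  have h : ∑ x : (A × B) × C × D, f x.1.1 x.1.2 x.2.1 x.2.2
       = ∑ y : (D × C) × B × A, f y.2.2 y.2.1 y.1.2 y.1.1 :=
    Fintype.sum_equiv
      ⟨fun x => ((x.2.2, x.2.1), (x.1.2, x.1.1)),
       fun y => ((y.2.2, y.2.1), (y.1.2, y.1.1)),
       fun _ => rfl, fun _ => rfl⟩ _ _ (fun x => rfl)
  simpa [Fintype.sum_prod_type] using h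


/-- If the embedding parameters of the training example are all distinct from those of
the validation example, then the part of the gradient inner product coming from the
embedding parameters (all parameters except `W`) vanishes, and the total gradient
inner product equals `∑_k ∑_{k'} α_{k,k'} ⟨h_{x_v,y_{v,<k}}, h_{x_i,y_{i,<k'}}⟩` with
`α_{k,k'} = ⟨e_{y_{v,k}} − π_θ(·|x_v,y_{v,<k}), e_{y_{i,k'}} − π_θ(·|x_i,y_{i,<k'})⟩`. -/
theorem forvalue_distinct_inputs (m d : ℕ) [NeZero m]
    (P : Type) [Fintype P] [DecidableEq P]
    (Kv Ki : ℕ) (pv : Fin Kv → P) (pi : Fin Ki → P)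
    (yv : Fin Kv → Fin m) (yi : Fin Ki → Fin m)
    (hdisj : ∀ k k', pv k ≠ pi k')
    (θ : ForValue.ParamSpace m d P) :
    (∑ c : P × Fin d,
        gradient (ForValue.loglik Kv pv yv) θ (Sum.inr c)
          * gradient (ForValue.loglik Ki pi yi) θ (Sum.inr c) = 0)
    ∧ ⟪gradient (ForValue.loglik Kv pv yv) θ, gradient (ForValue.loglik Ki pi yi) θ⟫
      = ∑ k, ∑ k',
          (∑ i, ((if i = yv k then (1 : ℝ) else 0) - ForValue.prob θ (pv k) i)
              * ((if i = yi k' then (1 : ℝ) else 0) - ForValue.prob θ (pi k') i))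
            * (∑ j, θ (Sum.inr (pv k, j)) * θ (Sum.inr (pi k', j))) := by
  have h1 : ∑ c : P × Fin d,
      gradient (ForValue.loglik Kv pv yv) θ (Sum.inr c)
        * gradient (ForValue.loglik Ki pi yi) θ (Sum.inr c) = 0 := by
    refine Finset.sum_eq_zero fun c _ => ?_
    obtain ⟨q, j⟩ := c
    rw [ForValue.grad_inr, ForValue.grad_inr, Finset.sum_mul]
    refine Finset.sum_eq_zero fun k _ => ?_
    by_cases h : pv k = q
    · rw [if_pos h]
      have hz : (∑ k', if pi k' = q
          then θ (Sum.inl (yi k', j)) - ∑ i, ForValue.prob θ (pi k') i * θ (Sum.inl (i, j))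
          else 0) = 0 :=
        Finset.sum_eq_zero fun k' _ => if_neg (fun h' => hdisj k k' (h.trans h'.symm))
      rw [hz, mul_zero]
    · rw [if_neg h, zero_mul]
  refine ⟨h1, ?_⟩
  have hinner : ⟪gradient (ForValue.loglik Kv pv yv) θ,
      gradient (ForValue.loglik Ki pi yi) θ⟫
      = ∑ c : (Fin m × Fin d) ⊕ (P × Fin d),
          gradient (ForValue.loglik Kv pv yv) θ c
            * gradient (ForValue.loglik Ki pi yi) θ c := by
    simp only [PiLp.inner_apply, RCLike.inner_apply, conj_trivial, mul_comm]
  rw [hinner, Fintype.sum_sum_type, h1, add_zero, Fintype.sum_prod_type]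
  simp only [ForValue.grad_inl, Finset.sum_mul, Finset.mul_sum]
  rw [ForValue.sum_rev4 (fun (a : Fin m) (b : Fin d) (c : Fin Ki) (dd : Fin Kv) =>
    ((if a = yv dd then (1:ℝ) else 0) - ForValue.prob θ (pv dd) a) * θ (Sum.inr (pv dd, b)) *
    (((if a = yi c then (1:ℝ) else 0) - ForValue.prob θ (pi c) a) * θ (Sum.inr (pi c, b))))]
  refine Finset.sum_congr rfl fun k _ => Finset.sum_congr rfl fun k' _ =>
    Finset.sum_congr rfl fun j _ => Finset.sum_congr rfl fun i _ => ?_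
  ring
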